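/- arXiv:1302.5868 — 4 statements merged into one kernel-verified Lean document; each statement's English description precedes it below -/
import Mathlib

section
/- Young-type entropy inequality: for a probability measure μ on a measurable space, a positive bounded measurable function f with μ(f) appearing, and a measurable function g with μ(e^g) < ∞, one has μ(fg) ≤ μ(f log f) - μ(f) log μ(f) + μ(f) log μ(e^g). -/
/-!
Pointwise, Young's inequality `a t ≤ a log a - a + eᵗ` (for `a > 0`) is `log x ≤ x - 1` at
`x = eᵗ / a`. Integrating it at `t = g - c` rather than `t = g` gives
`μ(fg) ≤ μ(f log f) - μ(f) + c μ(f) + e^{-c} μ(e^g)`, and the optimal shift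
`c = log μ(e^g) - log μ(f)` turns the last two terms into the claimed bound.
-/

open MeasureTheory Real

lemma Real.mul_le_mul_log_sub_add_exp {a : ℝ} (ha : 0 < a) (t : ℝ) :
    a * t ≤ a * log a - a + exp t := by
  have h := mul_le_mul_of_nonneg_left (add_one_le_exp (t - log a)) ha.le
  rw [exp_sub, exp_log ha, mul_div_cancel₀ _ ha.ne'] at h
  linarith

namespace MeasureTheory

variable {E : Type*} [MeasurableSpace E] {μ : Measure E}

lemma integral_pos_of_forall_pos [NeZero μ] {f : E → ℝ} (hf : Integrable f μ)
    (hpos : ∀ x, 0 < f x) : 0 < ∫ x, f x ∂μ := by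
  simpa [exp_log (hpos _)] using
    integral_exp_pos (f := fun x => log (f x)) (by simpa [exp_log (hpos _)] using hf)

lemma integral_mul_le_integral_mul_log_sub_add_integral_exp {f g : E → ℝ}
    (hpos : ∀ x, 0 < f x) (hf : Integrable f μ) (hfg : Integrable (fun x => f x * g x) μ)
    (hflog : Integrable (fun x => f x * log (f x)) μ)
    (hexp : Integrable (fun x => exp (g x)) μ) :
    ∫ x, f x * g x ∂μ ≤ ∫ x, f x * log (f x) ∂μ - ∫ x, f x ∂μ + ∫ x, exp (g x) ∂μ := by
  have hsub : Integrable (fun x => f x * log (f x) - f x) μ := hflog.sub hf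
  calc ∫ x, f x * g x ∂μ ≤ ∫ x, (f x * log (f x) - f x + exp (g x)) ∂μ :=
        integral_mono hfg (hsub.add hexp) fun x => mul_le_mul_log_sub_add_exp (hpos x) (g x)
    _ = _ := by rw [integral_add hsub hexp, integral_sub hflog hf]

end MeasureTheory

theorem stmt6_general {E : Type*} [MeasurableSpace E] (μ : Measure E) [IsProbabilityMeasure μ]
    (f g : E → ℝ)
    (hfpos : ∀ x, 0 < f x)
    (hintf : Integrable f μ)
    (hintfg : Integrable (fun x => f x * g x) μ)
    (hintflog : Integrable (fun x => f x * Real.log (f x)) μ)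
    (hinteg : Integrable (fun x => Real.exp (g x)) μ) :
    ∫ x, f x * g x ∂μ
      ≤ ∫ x, f x * Real.log (f x) ∂μ
        - (∫ x, f x ∂μ) * Real.log (∫ x, f x ∂μ)
        + (∫ x, f x ∂μ) * Real.log (∫ x, Real.exp (g x) ∂μ) := by
  set F := ∫ x, f x ∂μ
  set Z := ∫ x, exp (g x) ∂μ
  have hF : 0 < F := integral_pos_of_forall_pos hintf hfpos
  have hZ : 0 < Z := integral_exp_pos hinteg
  set c := log Z - log F
  have hexp_c : exp c = Z / F := by rw [exp_sub, exp_log hZ, exp_log hF]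
  have hintfc : Integrable (fun x => f x * c) μ := hintf.mul_const c
  have hint_shift : Integrable (fun x => f x * g x - f x * c) μ := hintfg.sub hintfc
  have hshift := integral_mul_le_integral_mul_log_sub_add_integral_exp (g := fun x => g x - c)
    hfpos hintf (by simpa only [mul_sub] using hint_shift) hintflog
    (by simpa only [exp_sub] using hinteg.div_const (exp c))
  simp only [mul_sub, exp_sub] at hshift
  rw [integral_sub hintfg hintfc, integral_mul_const, integral_div, hexp_c,
    div_div_cancel₀ hZ.ne'] at hshift
  linarith

/-- Young-type entropy inequality:
`μ(fg) ≤ μ(f log f) - μ(f) log μ(f) + μ(f) log μ(e^g)`. -/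
theorem stmt6 {E : Type*} [MeasurableSpace E] (μ : Measure E) [IsProbabilityMeasure μ]
    (f g : E → ℝ) (hfm : Measurable f) (hgm : Measurable g)
    (hfpos : ∀ x, 0 < f x) (hfb : ∃ C : ℝ, ∀ x, f x ≤ C)
    (hintf : Integrable f μ)
    (hintfg : Integrable (fun x => f x * g x) μ)
    (hintflog : Integrable (fun x => f x * Real.log (f x)) μ)
    (hinteg : Integrable (fun x => Real.exp (g x)) μ) :
    ∫ x, f x * g x ∂μ
      ≤ ∫ x, f x * Real.log (f x) ∂μ
        - (∫ x, f x ∂μ) * Real.log (∫ x, f x ∂μ)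
        + (∫ x, f x ∂μ) * Real.log (∫ x, Real.exp (g x) ∂μ) :=
  stmt6_general μ f g hfpos hintf hintfg hintflog hinteg
end

section
/- If a semigroup P_T on bounded measurable functions satisfies the shift Harnack inequality (P_T f(x))^p ≤ (P_T{f(y+·)^p})(x) · exp(C₁|y|²) for all non-negative bounded measurable f, all x,y ∈ ℝ, some p > 1 and constant C₁ > 0, then for each x the measure A ↦ P_T 1_A(x) is absolutely continuous with respect to Lebesgue measure on ℝ. -/
open MeasureTheory Real

/-! Translating a Lebesgue-null set `A` by `y` keeps it null, so by Tonelli the set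
`{(y, z) | y + z ∈ A}` is null for `volume × ν`; hence `ν (A - y) = 0` for almost every `y`.
For such a `y` the shift Harnack inequality applied to `f = 1_A` bounds `ν(A)^p` by
`ν(A - y) · exp(C₁ y²) = 0`. -/

theorem ae_measure_preimage_const_add_eq_zero {G : Type*} [MeasurableSpace G] [AddGroup G]
    [MeasurableAdd₂ G] {μ : Measure G} [SFinite μ] [μ.IsAddRightInvariant]
    (ν : Measure G) [SFinite ν] {A : Set G} (hA : MeasurableSet A) (hA0 : μ A = 0) :
    ∀ᵐ y ∂μ, ν ((y + ·) ⁻¹' A) = 0 := by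
  have hS : MeasurableSet {q : G × G | q.1 + q.2 ∈ A} := measurable_add hA
  refine (Measure.measure_prod_null hS).mp ?_
  calc μ.prod ν {q : G × G | q.1 + q.2 ∈ A} = ∫⁻ z, μ ((· + z) ⁻¹' A) ∂ν :=
        Measure.prod_apply_symm hS
    _ = 0 := by simp only [measure_preimage_add_right, hA0, lintegral_zero]

theorem stmt8_general (μ : ℝ → Measure ℝ) (hprob : ∀ x, IsProbabilityMeasure (μ x))
    (p C1 : ℝ) (hp : 1 < p)
    (harnack : ∀ f : ℝ → ℝ, Measurable f → (∀ z, 0 ≤ f z) → (∃ C : ℝ, ∀ z, f z ≤ C) →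
      ∀ x y : ℝ,
        (∫ z, f z ∂(μ x)) ^ p ≤ (∫ z, (f (y + z)) ^ p ∂(μ x)) * Real.exp (C1 * y^2)) :
    ∀ x : ℝ, μ x ≪ (volume : Measure ℝ) := by
  intro x
  refine Measure.AbsolutelyContinuous.mk fun A hA hA0 => ?_
  obtain ⟨y, hy⟩ := (ae_measure_preimage_const_add_eq_zero (μ x) hA hA0).exists
  have hshift : ∫ z, (A.indicator 1 (y + z) : ℝ) ^ p ∂(μ x) = 0 := by
    refine integral_eq_zero_of_ae ((measure_eq_zero_iff_ae_notMem.mp hy).mono fun z hz => ?_)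
    show A.indicator 1 (y + z) ^ p = 0
    rw [Set.indicator_of_notMem (show y + z ∉ A from hz), zero_rpow (by positivity)]
  have key := harnack (A.indicator 1) (measurable_one.indicator hA)
    (Set.indicator_nonneg fun _ _ => zero_le_one) ⟨1, Set.indicator_le_self' fun _ _ => zero_le_one⟩
    x y
  rw [integral_indicator_one hA, hshift, zero_mul] at key
  have := hprob x
  have hreal : (μ x).real A = 0 :=
    (rpow_eq_zero measureReal_nonneg (by positivity)).mp (key.antisymm (by positivity))
  exact (measureReal_eq_zero_iff).mp hreal

/-- Shift Harnack inequality implies absolute continuity: if the Markov operator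
`P_T f x = ∫ f dμ_x` satisfies `(P_T f(x))^p ≤ P_T(f(y+·)^p)(x) · e^{C₁ y²}` for
all nonnegative bounded measurable `f`, then each `μ_x` is absolutely continuous
with respect to Lebesgue measure. -/
theorem stmt8 (μ : ℝ → Measure ℝ) (hprob : ∀ x, IsProbabilityMeasure (μ x))
    (p C1 : ℝ) (hp : 1 < p) (hC1 : 0 < C1)
    (harnack : ∀ f : ℝ → ℝ, Measurable f → (∀ z, 0 ≤ f z) → (∃ C : ℝ, ∀ z, f z ≤ C) →
      ∀ x y : ℝ,
        (∫ z, f z ∂(μ x)) ^ p ≤ (∫ z, (f (y + z)) ^ p ∂(μ x)) * Real.exp (C1 * y^2)) :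
    ∀ x : ℝ, μ x ≪ (volume : Measure ℝ) :=
  stmt8_general μ hprob p C1 hp harnack
end

section
/- Harnack inequality implies strong Feller: if a Markov operator P_T on ℬ_b(ℝ) satisfies (P_T f(x))^p ≤ P_T f^p(y) · exp( (p/(p-1)) C |x-y|² ) for some p > 1, constant C > 0, all x,y and all non-negative f ∈ ℬ_b(ℝ), then P_T f is continuous for every f ∈ ℬ_b(ℝ), i.e. lim_{y→x} P_T f(y) = P_T f(x). -/
/-!
Write `Pg(x) = ∫ g ∂μ x` and apply the Harnack inequality to `1 + δ g` with `0 ≤ g ≤ 1`.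
Bernoulli's inequality bounds the left side below by `1 + p δ Pg(x)`, and convexity of `t ↦ t ^ p`
bounds `(1 + δ g) ^ p` above by the chord `1 + ((1 + δ) ^ p - 1) g`, so
`Pg(y) ≥ ((1 + p δ Pg(x)) e^{-Φ(x,y)} - 1) / ((1 + δ) ^ p - 1)`. As `y → x` the right side tends
to `p δ Pg(x) / ((1 + δ) ^ p - 1)`, which tends to `Pg(x)` as `δ → 0`: so `Pg` is lower
semicontinuous. Applied to `1 - g` this gives upper semicontinuity, and every bounded `f` is an
affine image of such a `g`.
-/

open MeasureTheory Real Filter Topology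

lemma rpow_one_add_mul_le {p δ θ : ℝ} (hp : 1 ≤ p) (hδ : -1 ≤ δ) (hθ₀ : 0 ≤ θ) (hθ₁ : θ ≤ 1) :
    (1 + δ * θ) ^ p ≤ 1 + ((1 + δ) ^ p - 1) * θ := by
  have h := (convexOn_rpow hp).2 (x := 1) (y := 1 + δ)
    (Set.mem_Ici.2 zero_le_one) (Set.mem_Ici.2 (by linarith))
    (sub_nonneg.2 hθ₁) hθ₀ (sub_add_cancel 1 θ)
  simp only [smul_eq_mul, one_rpow] at h
  calc (1 + δ * θ) ^ p = ((1 - θ) * 1 + θ * (1 + δ)) ^ p := by ring_nf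
    _ ≤ (1 - θ) * 1 + θ * (1 + δ) ^ p := h
    _ = 1 + ((1 + δ) ^ p - 1) * θ := by ring

lemma tendsto_rpow_one_add_sub_one_div (p : ℝ) :
    Tendsto (fun δ : ℝ => ((1 + δ) ^ p - 1) / δ) (𝓝[≠] 0) (𝓝 p) := by
  have h := hasDerivAt_iff_tendsto_slope_zero.1
    (hasDerivAt_rpow_const (x := 1) (p := p) (Or.inl one_ne_zero))
  simpa [div_eq_inv_mul] using h

variable {X E : Type*} [MeasurableSpace E]

def HarnackIneq (μ : X → Measure E) (p : ℝ) (Φ : X → X → ℝ) : Prop :=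
  ∀ f : E → ℝ, Measurable f → (∀ z, 0 ≤ f z) → (∃ M : ℝ, ∀ z, f z ≤ M) → ∀ x y : X,
    (∫ z, f z ∂μ x) ^ p ≤ (∫ z, f z ^ p ∂μ y) * exp (Φ x y)

lemma integrable_of_abs_le {ν : Measure E} [IsFiniteMeasure ν] {f : E → ℝ} (hf : Measurable f)
    {M : ℝ} (hM : ∀ z, |f z| ≤ M) : Integrable f ν :=
  .of_bound hf.aestronglyMeasurable M (ae_of_all _ hM)

namespace HarnackIneq

variable {μ : X → Measure E} [∀ x, IsProbabilityMeasure (μ x)] {p : ℝ} {Φ : X → X → ℝ}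
  {g : E → ℝ}

lemma one_add_mul_integral_mul_exp_neg_le (h : HarnackIneq μ p Φ) (hp : 1 ≤ p) (hg : Measurable g)
    (hg₀ : ∀ z, 0 ≤ g z) (hg₁ : ∀ z, g z ≤ 1) {δ : ℝ} (hδ : 0 ≤ δ) (x y : X) :
    (1 + p * δ * ∫ z, g z ∂μ x) * exp (-Φ x y) ≤ 1 + ((1 + δ) ^ p - 1) * ∫ z, g z ∂μ y := by
  have hg_int : ∀ x, Integrable g (μ x) := fun x =>
    integrable_of_abs_le hg fun z => abs_le.2 ⟨by linarith [hg₀ z], hg₁ z⟩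
  have hδg : ∀ z, 0 ≤ δ * g z := fun z => mul_nonneg hδ (hg₀ z)
  have harnack := h (fun z => 1 + δ * g z) (measurable_const.add (hg.const_mul δ))
    (fun z => by linarith [hδg z]) ⟨1 + δ, fun z => by nlinarith [hg₁ z]⟩ x y
  have hmean : ∫ z, 1 + δ * g z ∂μ x = 1 + δ * ∫ z, g z ∂μ x := by
    rw [integral_add (integrable_const 1) ((hg_int x).const_mul δ), integral_const,
      integral_const_mul]
    simp
  have hchord : ∫ z, (1 + δ * g z) ^ p ∂μ y ≤ 1 + ((1 + δ) ^ p - 1) * ∫ z, g z ∂μ y := by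
    have hint := (integrable_const 1).add ((hg_int y).const_mul ((1 + δ) ^ p - 1))
    calc ∫ z, (1 + δ * g z) ^ p ∂μ y ≤ ∫ z, 1 + ((1 + δ) ^ p - 1) * g z ∂μ y :=
          integral_mono_of_nonneg (ae_of_all _ fun z => rpow_nonneg (by linarith [hδg z]) p) hint
            (ae_of_all _ fun z => rpow_one_add_mul_le hp (by linarith) (hg₀ z) (hg₁ z))
      _ = 1 + ((1 + δ) ^ p - 1) * ∫ z, g z ∂μ y := by
          rw [integral_add (integrable_const 1) ((hg_int y).const_mul _), integral_const,
            integral_const_mul]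
          simp
  have hbernoulli : 1 + p * δ * ∫ z, g z ∂μ x ≤ (1 + δ * ∫ z, g z ∂μ x) ^ p := by
    rw [mul_assoc]
    exact one_add_mul_self_le_rpow_one_add
      (by linarith [mul_nonneg hδ (integral_nonneg hg₀ (μ := μ x))]) hp
  rw [exp_neg, ← div_eq_mul_inv, div_le_iff₀ (exp_pos _)]
  calc 1 + p * δ * ∫ z, g z ∂μ x ≤ (∫ z, 1 + δ * g z ∂μ x) ^ p := hmean ▸ hbernoulli
    _ ≤ (∫ z, (1 + δ * g z) ^ p ∂μ y) * exp (Φ x y) := harnack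
    _ ≤ _ := mul_le_mul_of_nonneg_right hchord (exp_nonneg _)

lemma lowerSemicontinuousAt_integral [TopologicalSpace X] (h : HarnackIneq μ p Φ) (hp : 1 < p)
    {x : X} (hΦ : Tendsto (Φ x) (𝓝 x) (𝓝 0)) (hg : Measurable g) (hg₀ : ∀ z, 0 ≤ g z)
    (hg₁ : ∀ z, g z ≤ 1) : LowerSemicontinuousAt (fun x => ∫ z, g z ∂μ x) x := by
  intro a' ha'
  set a := ∫ z, g z ∂μ x
  have hδ_lim : Tendsto (fun δ : ℝ => p * δ * a / ((1 + δ) ^ p - 1)) (𝓝[>] 0) (𝓝 a) := by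
    have h : Tendsto (fun δ : ℝ => p * a / (((1 + δ) ^ p - 1) / δ)) (𝓝[>] 0) (𝓝 (p * a / p)) :=
      tendsto_const_nhds.div
        ((tendsto_rpow_one_add_sub_one_div p).mono_left (nhdsGT_le_nhdsNE 0)) (by positivity)
    rw [mul_div_cancel_left₀ a (by positivity)] at h
    refine h.congr fun δ => ?_
    rw [div_div_eq_mul_div, mul_right_comm]
  obtain ⟨δ, hδa', hδ : 0 < δ⟩ :=
    ((hδ_lim.eventually (lt_mem_nhds ha')).and self_mem_nhdsWithin).exists
  have hK : 0 < (1 + δ) ^ p - 1 := by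
    rw [sub_pos]
    exact one_lt_rpow (by linarith) (by linarith)
  have hlim : Tendsto (fun y => ((1 + p * δ * a) * exp (-Φ x y) - 1) / ((1 + δ) ^ p - 1)) (𝓝 x)
      (𝓝 (p * δ * a / ((1 + δ) ^ p - 1))) := by
    simpa using ((hΦ.neg.rexp.const_mul (1 + p * δ * a)).sub_const 1).div_const _
  filter_upwards [hlim.eventually (lt_mem_nhds hδa')] with y hy
  refine hy.trans_le ?_
  rw [div_le_iff₀ hK]
  linarith [h.one_add_mul_integral_mul_exp_neg_le hp.le hg hg₀ hg₁ hδ.le x y]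

theorem continuous_integral_of_nonneg_of_le_one [TopologicalSpace X] (h : HarnackIneq μ p Φ)
    (hp : 1 < p) (hΦ : ∀ x, Tendsto (Φ x) (𝓝 x) (𝓝 0)) (hg : Measurable g) (hg₀ : ∀ z, 0 ≤ g z)
    (hg₁ : ∀ z, g z ≤ 1) : Continuous fun x => ∫ z, g z ∂μ x := by
  refine continuous_iff_lower_upperSemicontinuous.2
    ⟨fun x => h.lowerSemicontinuousAt_integral hp (hΦ x) hg hg₀ hg₁,
      fun x b (hb : ∫ z, g z ∂μ x < b) => ?_⟩
  have hcompl : ∀ x, ∫ z, 1 - g z ∂μ x = 1 - ∫ z, g z ∂μ x := fun x => by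
    rw [integral_sub (integrable_const 1)
      (integrable_of_abs_le hg fun z => abs_le.2 ⟨by linarith [hg₀ z], hg₁ z⟩), integral_const]
    simp
  have hlsc := h.lowerSemicontinuousAt_integral hp (hΦ x) (g := fun z => 1 - g z)
    (measurable_const.sub hg) (fun z => sub_nonneg.2 (hg₁ z)) (fun z => sub_le_self 1 (hg₀ z))
    (1 - b)
    (by show 1 - b < ∫ z, 1 - g z ∂μ x; rw [hcompl]; linarith)
  filter_upwards [hlsc] with y hy
  rw [hcompl] at hy
  linarith

theorem continuous_integral [TopologicalSpace X] (h : HarnackIneq μ p Φ) (hp : 1 < p)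
    (hΦ : ∀ x, Tendsto (Φ x) (𝓝 x) (𝓝 0)) {f : E → ℝ} (hf : Measurable f) {M : ℝ}
    (hM : ∀ z, |f z| ≤ M) : Continuous fun x => ∫ z, f z ∂μ x := by
  set D := |M| + 1
  have hD : 0 < D := by positivity
  have hfD : ∀ z, -D < f z ∧ f z < D := fun z => by
    have := abs_le.1 ((hM z).trans (le_abs_self M)); constructor <;> linarith
  have hg := h.continuous_integral_of_nonneg_of_le_one hp hΦ
    (g := fun z => (f z + D) / (2 * D)) (by fun_prop)
    (fun z => div_nonneg (by linarith [hfD z]) (by linarith))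
    (fun z => (div_le_one (by linarith)).2 (by linarith [hfD z]))
  have hf_eq : (fun x => ∫ z, f z ∂μ x) = fun x => 2 * D * ∫ z, (f z + D) / (2 * D) ∂μ x - D := by
    ext x
    rw [integral_div, integral_add (integrable_of_abs_le hf hM) (integrable_const D),
      integral_const]
    simp only [probReal_univ, smul_eq_mul, one_mul]
    field_simp
    ring
  rw [hf_eq]
  exact (continuous_const.mul hg).sub continuous_const

end HarnackIneq

theorem stmt11_general (μ : ℝ → Measure ℝ) (hprob : ∀ x, IsProbabilityMeasure (μ x))
    (p C : ℝ) (hp : 1 < p)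
    (harnack : ∀ f : ℝ → ℝ, Measurable f → (∀ z, 0 ≤ f z) →
      (∃ M : ℝ, ∀ z, f z ≤ M) → ∀ x y : ℝ,
        (∫ z, f z ∂(μ x)) ^ p
          ≤ (∫ z, (f z) ^ p ∂(μ y)) * Real.exp ((p/(p-1)) * C * (x - y)^2)) :
    ∀ f : ℝ → ℝ, Measurable f → (∃ M : ℝ, ∀ z, |f z| ≤ M) →
      Continuous (fun x => ∫ z, f z ∂(μ x)) := by
  intro f hf ⟨M, hM⟩
  have hΦ (x : ℝ) : Tendsto (fun y => p / (p - 1) * C * (x - y) ^ 2) (𝓝 x) (𝓝 0) :=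
    (by fun_prop : Continuous fun y : ℝ => p / (p - 1) * C * (x - y) ^ 2).tendsto' x 0 (by simp)
  have := hprob
  exact HarnackIneq.continuous_integral harnack hp hΦ hf hM

/-- Harnack inequality implies the strong Feller property: if for some `p > 1`,
`(P_T f(x))^p ≤ P_T f^p(y) · exp((p/(p-1)) C |x-y|²)` for all nonnegative bounded
measurable `f`, then `x ↦ P_T f(x)` is continuous for every bounded measurable `f`. -/
theorem stmt11 (μ : ℝ → Measure ℝ) (hprob : ∀ x, IsProbabilityMeasure (μ x))
    (p C : ℝ) (hp : 1 < p) (hC : 0 < C)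
    (harnack : ∀ f : ℝ → ℝ, Measurable f → (∀ z, 0 ≤ f z) →
      (∃ M : ℝ, ∀ z, f z ≤ M) → ∀ x y : ℝ,
        (∫ z, f z ∂(μ x)) ^ p
          ≤ (∫ z, (f z) ^ p ∂(μ y)) * Real.exp ((p/(p-1)) * C * (x - y)^2)) :
    ∀ f : ℝ → ℝ, Measurable f → (∃ M : ℝ, ∀ z, |f z| ≤ M) →
      Continuous (fun x => ∫ z, f z ∂(μ x)) :=
  stmt11_general μ hprob p C hp harnack
end

section
/- For H ∈ (0,1) with H < 1/2 and the constant C_H = Γ(2H)Γ(1/2-H)(1/2-H)/B(2-2H,2H) (resp. C_H = 1 for H = 1/2, C_H = Γ(H-1/2)/B(2-2H,H-1/2) for H > 1/2), the operator K_H defined via the fractional integral composition satisfies K_H(C_H x^{1/2-H})(t) = t for all t ∈ [0,T]; in the Brownian case H = 1/2 this reduces to ∫_0^t 1 ds = t. -/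
/-!
Everything reduces to the Beta integral `∫₀ᵗ (t-s)^(α-1) s^(β-1) ds = B(α,β) t^(α+β-1)`, i.e.
`I^α s^(β-1) = Γ(β)/Γ(α+β) s^(α+β-1)`. Pushing the power `s^(1/2-H)` through the two fractional
integrals gives `K_H s^(1/2-H) = Γ(2-2H)/Γ(3/2-H) · t` in all three regimes, and `C_H` simplifies
to the reciprocal `Γ(3/2-H)/Γ(2-2H)`.
-/

open MeasureTheory intervalIntegral Real

/-- Left Riemann–Liouville fractional integral of order `α`:
`(I_{0+}^α g)(t) = (1/Γ(α)) ∫_0^t (t-s)^{α-1} g(s) ds`. -/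
noncomputable def RL (α : ℝ) (g : ℝ → ℝ) (t : ℝ) : ℝ :=
  (1 / Real.Gamma α) * ∫ s in (0:ℝ)..t, (t - s) ^ (α - 1) * g s

/-- The Beta function `B(a,b) = Γ(a)Γ(b)/Γ(a+b)`. -/
noncomputable def Bfun (a b : ℝ) : ℝ :=
  Real.Gamma a * Real.Gamma b / Real.Gamma (a + b)

/-- The operator `K_H`: for `H < 1/2`, `K_H f = I_{0+}^{2H} s^{1/2-H} I_{0+}^{1/2-H} s^{H-1/2} f`;
for `H > 1/2`, `K_H f = I_{0+}^1 s^{H-1/2} I_{0+}^{H-1/2} s^{1/2-H} f`; for `H = 1/2`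
it is plain integration. -/
noncomputable def KHop (H : ℝ) (f : ℝ → ℝ) : ℝ → ℝ :=
  if H < 1/2 then
    RL (2*H) (fun s => s ^ (1/2 - H) * RL (1/2 - H) (fun r => r ^ (H - 1/2) * f r) s)
  else if 1/2 < H then
    RL 1 (fun s => s ^ (H - 1/2) * RL (H - 1/2) (fun r => r ^ (1/2 - H) * f r) s)
  else fun t => ∫ s in (0:ℝ)..t, f s

/-- The constant `C_H` from the paper. -/
noncomputable def CH (H : ℝ) : ℝ :=
  if H < 1/2 then
    Real.Gamma (2*H) * Real.Gamma (1/2 - H) * (1/2 - H) / Bfun (2 - 2*H) (2*H)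
  else if 1/2 < H then
    Real.Gamma (H - 1/2) / Bfun (2 - 2*H) (H - 1/2)
  else 1

lemma integral_sub_rpow_mul_rpow {α β t : ℝ} (hα : 0 < α) (hβ : 0 < β) (ht : 0 < t) :
    ∫ s in (0:ℝ)..t, (t - s) ^ (α - 1) * s ^ (β - 1)
      = Gamma α * Gamma β / Gamma (α + β) * t ^ (α + β - 1) := by
  apply Complex.ofReal_injective
  calc ((∫ s in (0:ℝ)..t, (t - s) ^ (α - 1) * s ^ (β - 1) : ℝ) : ℂ)
      = ∫ s in (0:ℝ)..t, (s : ℂ) ^ ((β : ℂ) - 1) * ((t : ℂ) - s) ^ ((α : ℂ) - 1) := by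
        rw [← intervalIntegral.integral_ofReal]
        refine intervalIntegral.integral_congr fun s hs => ?_
        rw [Set.uIcc_of_le ht.le] at hs
        push_cast [Complex.ofReal_cpow hs.1, Complex.ofReal_cpow (sub_nonneg.2 hs.2)]
        ring
    _ = (t : ℂ) ^ ((β : ℂ) + α - 1) * Complex.betaIntegral β α :=
        Complex.betaIntegral_scaled _ _ ht
    _ = _ := by
        rw [Complex.betaIntegral_eq_Gamma_mul_div _ _ (by simpa) (by simpa),
          ← Complex.ofReal_add, Complex.Gamma_ofReal, Complex.Gamma_ofReal, Complex.Gamma_ofReal]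
        push_cast [Complex.ofReal_cpow ht.le]
        ring_nf

lemma RL_congr {α t : ℝ} {f g : ℝ → ℝ} (hfg : Set.EqOn f g (Set.uIoc 0 t)) :
    RL α f t = RL α g t := by
  unfold RL
  congr 1
  refine intervalIntegral.integral_congr_ae (Filter.Eventually.of_forall fun s hs => ?_)
  rw [hfg hs]

lemma RL_const_mul_rpow {α β t : ℝ} (c : ℝ) (hα : 0 < α) (hβ : 0 < β) (ht : 0 < t) :
    RL α (fun s => c * s ^ (β - 1)) t = c * (Gamma β / Gamma (α + β)) * t ^ (α + β - 1) := by
  have hΓ : Gamma α ≠ 0 := (Gamma_pos_of_pos hα).ne'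
  simp_rw [RL, mul_left_comm _ c, intervalIntegral.integral_const_mul,
    integral_sub_rpow_mul_rpow hα hβ ht]
  field_simp

lemma CH_eq {H : ℝ} (hH : 0 < H) :
    CH H = Gamma (3/2 - H) / Gamma (2 - 2*H) := by
  rw [CH]
  split_ifs with hlt hgt
  · have hΓ : Gamma (2*H) ≠ 0 := (Gamma_pos_of_pos (by linarith)).ne'
    have h : Gamma (3/2 - H) = (1/2 - H) * Gamma (1/2 - H) := by
      rw [← Real.Gamma_add_one (by linarith)]; ring_nf
    rw [Bfun, h, show 2 - 2*H + 2*H = 2 by ring, Real.Gamma_two]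
    field_simp
  · have hΓ : Gamma (H - 1/2) ≠ 0 := (Gamma_pos_of_pos (by linarith)).ne'
    rw [Bfun, show 2 - 2*H + (H - 1/2) = 3/2 - H by ring, div_div_eq_mul_div,
      mul_comm (Gamma (2 - 2*H)), mul_div_mul_left _ _ hΓ]
  · rw [show H = 1/2 by linarith]
    norm_num

lemma KHop_const_mul_rpow_of_lt_half {H t : ℝ} (c : ℝ) (hH : 0 < H) (hlt : H < 1/2)
    (ht : 0 < t) :
    KHop H (fun s => c * s ^ (1/2 - H)) t = c * (Gamma (2 - 2*H) / Gamma (3/2 - H)) * t := by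
  have inner : ∀ s > 0,
      s ^ (1/2 - H) * RL (1/2 - H) (fun r => r ^ (H - 1/2) * (c * r ^ (1/2 - H))) s =
        c / Gamma (3/2 - H) * s ^ ((2 - 2*H) - 1) := by
    intro s hs
    rw [RL_congr (g := fun r => c * r ^ ((1:ℝ) - 1)),
      RL_const_mul_rpow c (by linarith) one_pos hs, Gamma_one, mul_left_comm, ← rpow_add hs]
    · ring_nf
    · intro r hr
      dsimp only
      rw [mul_left_comm, ← rpow_add (Set.uIoc_of_le hs.le ▸ hr).1]
      ring_nf
  rw [KHop, if_pos hlt, RL_congr (g := fun s => c / Gamma (3/2 - H) * s ^ ((2 - 2*H) - 1)),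
    RL_const_mul_rpow _ (by linarith) (by linarith) ht, show 2*H + (2 - 2*H) = 2 by ring,
    Gamma_two]
  · rw [show (2:ℝ) - 1 = 1 by norm_num, rpow_one]
    ring
  · exact fun s hs => inner s (Set.uIoc_of_le ht.le ▸ hs).1

lemma KHop_const_mul_rpow_of_half_lt {H t : ℝ} (c : ℝ) (hH : H < 1) (hgt : 1/2 < H)
    (ht : 0 < t) :
    KHop H (fun s => c * s ^ (1/2 - H)) t = c * (Gamma (2 - 2*H) / Gamma (3/2 - H)) * t := by
  have inner : ∀ s > 0,
      s ^ (H - 1/2) * RL (H - 1/2) (fun r => r ^ (1/2 - H) * (c * r ^ (1/2 - H))) s =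
        c * (Gamma (2 - 2*H) / Gamma (3/2 - H)) * s ^ ((1:ℝ) - 1) := by
    intro s hs
    rw [RL_congr (g := fun r => c * r ^ ((2 - 2*H) - 1)),
      RL_const_mul_rpow c (by linarith) (by linarith) hs, mul_left_comm, ← rpow_add hs]
    · ring_nf
    · intro r hr
      dsimp only
      rw [mul_left_comm, ← rpow_add (Set.uIoc_of_le hs.le ▸ hr).1]
      ring_nf
  rw [KHop, if_neg hgt.not_gt, if_pos hgt,
    RL_congr (g := fun s => c * (Gamma (2 - 2*H) / Gamma (3/2 - H)) * s ^ ((1:ℝ) - 1)),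
    RL_const_mul_rpow _ one_pos one_pos ht]
  · norm_num
  · exact fun s hs => inner s (Set.uIoc_of_le ht.le ▸ hs).1

lemma KHop_const_mul_rpow {H t : ℝ} (c : ℝ) (hH : H ∈ Set.Ioo (0:ℝ) 1) (ht : 0 ≤ t) :
    KHop H (fun s => c * s ^ (1/2 - H)) t = c * (Gamma (2 - 2*H) / Gamma (3/2 - H)) * t := by
  rcases ht.eq_or_lt with rfl | ht
  · unfold KHop RL
    split_ifs <;> simp
  rcases lt_trichotomy H (1/2) with hlt | rfl | hgt
  · exact KHop_const_mul_rpow_of_lt_half c hH.1 hlt ht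
  · norm_num [KHop, mul_comm]
  · exact KHop_const_mul_rpow_of_half_lt c hH.2 hgt ht

/-- For every `H ∈ (0,1)`, applying `K_H` to `s ↦ C_H s^{1/2-H}` gives the
identity function: `K_H(C_H x^{1/2-H})(t) = t`. -/
theorem stmt19 (H : ℝ) (hH : H ∈ Set.Ioo (0:ℝ) 1) (t : ℝ) (ht : 0 ≤ t) :
    KHop H (fun s => CH H * s ^ (1/2 - H)) t = t := by
  have hΓ₁ : Gamma (2 - 2*H) ≠ 0 := (Gamma_pos_of_pos (by linarith [hH.2])).ne'
  have hΓ₂ : Gamma (3/2 - H) ≠ 0 := (Gamma_pos_of_pos (by linarith [hH.2])).ne'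
  rw [KHop_const_mul_rpow _ hH ht, CH_eq hH.1, div_mul_div_comm, mul_comm (Gamma (3/2 - H)),
    div_self (mul_ne_zero hΓ₁ hΓ₂), one_mul]
end
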